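/- arXiv:2501.00850 — 2 statements merged into one kernel-verified Lean document; each statement's English description precedes it below -/
import Mathlib

section
/- For every natural number n, the following three statements are equivalent: (i) s₂(n) = s₃(n); (ii) ν₂(n!) = 2·ν₃(n!); (iii) there exists a natural number k such that 12^k divides n! and n!/12^k is coprime to 12 (i.e. 12^k exactly divides n!). -/
/-- Sum of digits of `n` in base `q`. -/
def digitSum (q n : ℕ) : ℕ := (Nat.digits q n).sum

/-!
Legendre's formula `(p - 1) ν_p(n!) = n - s_p(n)` gives `ν₂(n!) = n - s₂(n)` and
`2 ν₃(n!) = n - s₃(n)`, so (i) ⇔ (ii). Since `12 = 2² · 3`, the power `12^k` divides `m ≠ 0`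
exactly iff `ν₂(m) = 2k` and `ν₃(m) = k`, and such a `k` exists iff `ν₂(m) = 2 ν₃(m)`.
-/

open Nat

lemma padicValNat_two_factorial (n : ℕ) : padicValNat 2 n ! = n - digitSum 2 n := by
  simpa [digitSum] using sub_one_mul_padicValNat_factorial (p := 2) n

lemma two_mul_padicValNat_three_factorial (n : ℕ) :
    2 * padicValNat 3 n ! = n - digitSum 3 n := by
  simpa [digitSum] using sub_one_mul_padicValNat_factorial (p := 3) n

section TwoPrimes

variable {p q : ℕ} [Fact p.Prime] [Fact q.Prime]

lemma pow_mul_pow_pow_dvd_and_coprime_iff (hpq : p ≠ q) {a b m : ℕ} (ha : a ≠ 0) (hb : b ≠ 0)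
    (hm : m ≠ 0) (k : ℕ) :
    (p ^ a * q ^ b) ^ k ∣ m ∧ Coprime (p ^ a * q ^ b) (m / (p ^ a * q ^ b) ^ k) ↔
      padicValNat p m = a * k ∧ padicValNat q m = b * k := by
  have hpow : (p ^ a * q ^ b) ^ k = p ^ (a * k) * q ^ (b * k) := by
    rw [mul_pow, ← pow_mul, ← pow_mul]
  have hcop : Coprime (p ^ (a * k)) (q ^ (b * k)) :=
    Coprime.pow _ _ ((coprime_primes Fact.out Fact.out).mpr hpq)
  rw [hpow]
  constructor
  · rintro ⟨⟨r, rfl⟩, hr⟩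
    have hd0 := left_ne_zero_of_mul hm
    have hr0 := right_ne_zero_of_mul hm
    rw [Nat.mul_div_cancel_left _ (Nat.pos_of_ne_zero hd0)] at hr
    have hnd {l : ℕ} (hl : l.Prime) (hld : l ∣ p ^ a * q ^ b) : ¬l ∣ r :=
      hl.coprime_iff_not_dvd.mp (hr.coprime_dvd_left hld)
    rw [padicValNat.mul hd0 hr0, padicValNat.mul hd0 hr0,
      padicValNat_mul_pow_left _ _ hpq, padicValNat_mul_pow_right _ _ hpq.symm,
      padicValNat.eq_zero_of_not_dvd (hnd Fact.out ((dvd_pow_self p ha).mul_right _)),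
      padicValNat.eq_zero_of_not_dvd (hnd Fact.out ((dvd_pow_self q hb).mul_left _))]
    exact ⟨rfl, rfl⟩
  · rintro ⟨hvp, hvq⟩
    obtain ⟨r, rfl⟩ :=
      hcop.mul_dvd_of_dvd_of_dvd (hvp ▸ pow_padicValNat_dvd) (hvq ▸ pow_padicValNat_dvd)
    have hd0 := left_ne_zero_of_mul hm
    have hr0 := right_ne_zero_of_mul hm
    rw [padicValNat.mul hd0 hr0, padicValNat_mul_pow_left _ _ hpq] at hvp
    rw [padicValNat.mul hd0 hr0, padicValNat_mul_pow_right _ _ hpq.symm] at hvq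
    have hpr : ¬p ∣ r := fun h => (dvd_iff_padicValNat_ne_zero hr0).mp h (by omega)
    have hqr : ¬q ∣ r := fun h => (dvd_iff_padicValNat_ne_zero hr0).mp h (by omega)
    rw [Nat.mul_div_cancel_left _ (Nat.pos_of_ne_zero hd0)]
    exact ⟨dvd_mul_right _ _, Coprime.mul_left
      (((Nat.Prime.coprime_iff_not_dvd Fact.out).mpr hpr).pow_left _)
      (((Nat.Prime.coprime_iff_not_dvd Fact.out).mpr hqr).pow_left _)⟩

lemma exists_sq_mul_pow_dvd_and_coprime_iff (hpq : p ≠ q) {m : ℕ} (hm : m ≠ 0) :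
    (∃ k, (p ^ 2 * q) ^ k ∣ m ∧ Coprime (p ^ 2 * q) (m / (p ^ 2 * q) ^ k)) ↔
      padicValNat p m = 2 * padicValNat q m := by
  have h := pow_mul_pow_pow_dvd_and_coprime_iff hpq two_ne_zero one_ne_zero hm
  simp only [pow_one, one_mul] at h
  simp only [h]
  exact ⟨fun ⟨_, hvp, hvq⟩ => hvq ▸ hvp, fun hv => ⟨_, hv, rfl⟩⟩

end TwoPrimes

theorem stmt4 (n : ℕ) :
    (digitSum 2 n = digitSum 3 n ↔
        padicValNat 2 (Nat.factorial n) = 2 * padicValNat 3 (Nat.factorial n)) ∧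
    (padicValNat 2 (Nat.factorial n) = 2 * padicValNat 3 (Nat.factorial n) ↔
        ∃ k : ℕ, 12 ^ k ∣ Nat.factorial n ∧
          Nat.gcd 12 (Nat.factorial n / 12 ^ k) = 1) := by
  refine ⟨?_, ?_⟩
  · have h2 : digitSum 2 n ≤ n := digit_sum_le 2 n
    have h3 : digitSum 3 n ≤ n := digit_sum_le 3 n
    rw [padicValNat_two_factorial, two_mul_padicValNat_three_factorial]
    omega
  · rw [show (12 : ℕ) = 2 ^ 2 * 3 by norm_num]
    exact (exists_sq_mul_pow_dvd_and_coprime_iff (by decide) (factorial_ne_zero n)).symm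
end

section
/- Let Q ≥ 1 be an integer. There exists a constant C = C(Q) such that the following holds. Let J be a finite nonempty interval of integers and g : J → ℂ with |g(n)| = 1 for all n ∈ J. Then for all positive integers m₀, …, m_{Q−1} and R ≥ 1, | (1/|J|)·Σ_{n ∈ J} g(n) |^{2^Q} ≤ C·( (1/R^Q)·Σ_{r ∈ {1,…,R−1}^Q} | K(r₀·m₀, …, r_{Q−1}·m_{Q−1}) | + (m₀ + ⋯ + m_{Q−1})·R/|J| + 1/R ), where for integers t₀, …, t_{Q−1}, K(t₀, …, t_{Q−1}) = (1/|J|)·Σ_{n ∈ J} Π_{ε ∈ {0,1}^Q} 𝒞^{|ε|} g( n + Σ_{0 ≤ ℓ < Q} ε_ℓ·t_ℓ ), with 𝒞 denoting complex conjugation (applied |ε| = ε₀ + ⋯ + ε_{Q−1} times) and where g is extended by 0 outside J. -/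
/-!
The proof is an induction on `Q` driven by van der Corput's inequality. Summing `f` along the
progressions `n, n + m, …, n + (R - 1) m` over a window slightly larger than `J` and applying
Cauchy–Schwarz bounds `‖𝔼 f‖²` by the mean over `1 ≤ s < R` of the correlations
`‖𝔼 conj (f (n + s m)) * f n‖`, up to an error `O(m R / |J| + 1 / R)`. The correlation of a
cube product of order `Q` with its shift is the cube product of order `Q + 1`, so squaring the
bound for `Q`, applying Cauchy–Schwarz over the shifts `r`, and then van der Corput to each cube
product gives the bound for `Q + 1`, with constant `6 ^ (2 ^ Q - 1)`.
-/

open Finset ComplexConjugate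
open scoped BigOperators

lemma norm_expect_le_one {ι 𝕜 : Type*} [RCLike 𝕜] {s : Finset ι} {f : ι → 𝕜}
    (hf : ∀ i ∈ s, ‖f i‖ ≤ 1) :
    ‖𝔼 i ∈ s, f i‖ ≤ 1 := by
  obtain rfl | hs := s.eq_empty_or_nonempty
  · simp
  · exact (RCLike.norm_expect_le (K := ℝ)).trans (expect_le hs hf)

lemma sum_piFinset_fin_succ {α M : Type*} [AddCommMonoid M] (s : Finset α) {Q : ℕ}
    (F : (Fin (Q + 1) → α) → M) :
    ∑ r ∈ Fintype.piFinset (fun _ : Fin (Q + 1) ↦ s), F r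
      = ∑ a ∈ s, ∑ r ∈ Fintype.piFinset (fun _ : Fin Q ↦ s), F (Fin.cons a r) := by
  rw [← sum_product']
  refine (sum_equiv (Fin.consEquiv fun _ ↦ α) (fun p ↦ ?_) fun _ _ ↦ rfl).symm
  simp [Fin.consEquiv, Fin.forall_fin_succ]

lemma sq_inv_mul_sum_le {ι : Type*} {s : Finset ι} {K : ℝ} (hK : 0 < K) (hs : #s ≤ K) (x : ι → ℝ) :
    (K⁻¹ * ∑ i ∈ s, x i) ^ 2 ≤ K⁻¹ * ∑ i ∈ s, x i ^ 2 := by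
  calc (K⁻¹ * ∑ i ∈ s, x i) ^ 2 = K⁻¹ ^ 2 * (∑ i ∈ s, x i) ^ 2 := by ring
    _ ≤ K⁻¹ ^ 2 * (K * ∑ i ∈ s, x i ^ 2) := by
        gcongr
        exact sq_sum_le_card_mul_sum_sq.trans (by gcongr)
    _ = K⁻¹ * ∑ i ∈ s, x i ^ 2 := by field_simp

lemma sum_range_dist_le {x : ℕ → ℝ} (hx : ∀ d, 0 ≤ x d) {r R : ℕ} (hr : r < R) :
    ∑ s ∈ range R, x (r.dist s) ≤ x 0 + 2 * ∑ d ∈ Icc 1 (R - 1), x d := by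
  have le_of_one_side (t : Finset ℕ) (ht : (∀ s ∈ t, s < r) ∨ ∀ s ∈ t, r < s ∧ s < R) :
      ∑ s ∈ t, x (r.dist s) ≤ ∑ d ∈ Icc 1 (R - 1), x d := by
    rw [← sum_image fun s hs s' hs' h ↦ by simp only [Nat.dist] at h; grind]
    refine sum_le_sum_of_subset_of_nonneg ?_ fun d _ _ ↦ hx d
    simp only [subset_iff, mem_image, mem_Icc, Nat.dist]
    grind
  have below := le_of_one_side (Ico 0 r) (.inl fun s hs ↦ by simp at hs; omega)
  have above := le_of_one_side (Ico (r + 1) R) (.inr fun s hs ↦ by simp at hs; omega)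
  rw [range_eq_Ico, ← sum_Ico_consecutive _ r.zero_le hr.le, sum_eq_sum_Ico_succ_bot hr,
    Nat.dist_self]
  linarith

section VanDerCorput

variable {a b : ℤ} {f : ℤ → ℂ}

lemma sum_Icc_sub_add_eq_sum {M : Type*} [AddCommMonoid M] {F : ℤ → M}
    (hF : ∀ k ∉ Icc a b, F k = 0) {L c : ℤ} (hc : 0 ≤ c) (hcL : c ≤ L) :
    ∑ n ∈ Icc (a - L) b, F (n + c) = ∑ n ∈ Icc a b, F n := by
  have hshift : ∑ n ∈ Icc (a - L) b, F (n + c) = ∑ k ∈ Icc (a - L + c) (b + c), F k := by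
    rw [← map_add_right_Icc, sum_map]
    rfl
  rw [hshift]
  exact (sum_subset (Icc_subset_Icc (by linarith) (by linarith)) fun k _ hk ↦ hF k hk).symm

lemma card_Icc_sub_natCast (hab : a ≤ b) (L : ℕ) :
    #(Icc (a - L) b) = #(Icc a b) + L := by
  simp only [Int.card_Icc]
  omega

lemma norm_sum_shift_mul_conj_shift (hf0 : ∀ n ∉ Icc a b, f n = 0) {m R r s : ℕ}
    (hr : r ≤ R) (hs : s ≤ R) :
    ‖∑ n ∈ Icc (a - ↑(R * m)) b, f (n + ↑(r * m)) * conj (f (n + ↑(s * m)))‖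
      = ‖∑ n ∈ Icc a b, conj (f (n + ↑(r.dist s * m))) * f n‖ := by
  wlog hrs : r ≤ s generalizing r s
  · rw [Nat.dist_comm, ← this hs hr (by omega), ← Complex.norm_conj, map_sum]
    congr 1
    exact sum_congr rfl fun n _ ↦ by rw [map_mul, Complex.conj_conj, mul_comm]
  have hcorr := sum_Icc_sub_add_eq_sum (a := a) (b := b) (L := ↑(R * m)) (c := ↑(r * m))
    (F := fun k ↦ f k * conj (f (k + ↑(r.dist s * m)))) (fun k hk ↦ by simp [hf0 k hk])
    (by positivity) (by gcongr)
  have hsm : ∀ n : ℤ, n + ↑(r * m) + ↑(r.dist s * m) = n + ↑(s * m) := fun n ↦ by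
    rw [Nat.dist_eq_sub_of_le hrs]
    push_cast [hrs]
    ring
  simp only [hsm] at hcorr
  rw [hcorr]
  exact congrArg norm (sum_congr rfl fun n _ ↦ mul_comm _ _)

lemma sum_sum_range_shift (hf0 : ∀ n ∉ Icc a b, f n = 0) (m R : ℕ) :
    ∑ n ∈ Icc (a - ↑(R * m)) b, ∑ r ∈ range R, f (n + ↑(r * m)) = R * ∑ n ∈ Icc a b, f n := by
  rw [sum_comm, sum_congr rfl fun r hr ↦ sum_Icc_sub_add_eq_sum hf0 (by positivity)
    (by gcongr; exact (mem_range.1 hr).le)]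
  simp

lemma norm_sum_conj_shift_mul_le (hf : ∀ n, ‖f n‖ ≤ 1) (h : ℤ) :
    ‖∑ n ∈ Icc a b, conj (f (n + h)) * f n‖ ≤ #(Icc a b) := by
  calc ‖∑ n ∈ Icc a b, conj (f (n + h)) * f n‖ ≤ ∑ n ∈ Icc a b, ‖conj (f (n + h)) * f n‖ :=
        norm_sum_le _ _
    _ ≤ ∑ _n ∈ Icc a b, (1 : ℝ) := sum_le_sum fun n _ ↦ by
        rw [norm_mul, Complex.norm_conj]
        exact mul_le_one₀ (hf _) (norm_nonneg _) (hf n)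
    _ = #(Icc a b) := by simp

lemma sum_norm_sq_sum_range_shift_le (hf : ∀ n, ‖f n‖ ≤ 1) (hf0 : ∀ n ∉ Icc a b, f n = 0)
    (m R : ℕ) :
    ∑ n ∈ Icc (a - ↑(R * m)) b, ‖∑ r ∈ range R, f (n + ↑(r * m))‖ ^ 2
      ≤ R * (#(Icc a b) + 2 * ∑ d ∈ Icc 1 (R - 1),
        ‖∑ n ∈ Icc a b, conj (f (n + ↑(d * m))) * f n‖) := by
  set c : ℕ → ℝ := fun d ↦ ‖∑ n ∈ Icc a b, conj (f (n + ↑(d * m))) * f n‖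
  have expand : ((∑ n ∈ Icc (a - ↑(R * m)) b, ‖∑ r ∈ range R, f (n + ↑(r * m))‖ ^ 2 : ℝ) : ℂ)
      = ∑ r ∈ range R, ∑ s ∈ range R, ∑ n ∈ Icc (a - ↑(R * m)) b,
          f (n + ↑(r * m)) * conj (f (n + ↑(s * m))) := by
    push_cast
    simp_rw [← Complex.mul_conj', map_sum, sum_mul_sum]
    rw [sum_comm]
    exact sum_congr rfl fun r _ ↦ sum_comm
  have hc0 : c 0 ≤ #(Icc a b) := by simpa [c] using norm_sum_conj_shift_mul_le hf 0
  calc ∑ n ∈ Icc (a - ↑(R * m)) b, ‖∑ r ∈ range R, f (n + ↑(r * m))‖ ^ 2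
      = ‖∑ r ∈ range R, ∑ s ∈ range R, ∑ n ∈ Icc (a - ↑(R * m)) b,
          f (n + ↑(r * m)) * conj (f (n + ↑(s * m)))‖ := by
        rw [← expand, Complex.norm_real, Real.norm_of_nonneg (by positivity)]
    _ ≤ ∑ r ∈ range R, ∑ s ∈ range R, c (r.dist s) := by
        refine (norm_sum_le _ _).trans (sum_le_sum fun r hr ↦ (norm_sum_le _ _).trans_eq ?_)
        exact sum_congr rfl fun s hs ↦ norm_sum_shift_mul_conj_shift hf0
          (mem_range.1 hr).le (mem_range.1 hs).le
    _ ≤ ∑ r ∈ range R, (#(Icc a b) + 2 * ∑ d ∈ Icc 1 (R - 1), c d) :=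
        sum_le_sum fun r hr ↦ by
          have := sum_range_dist_le (x := c) (fun _ ↦ norm_nonneg _) (mem_range.1 hr)
          linarith
    _ = _ := by rw [sum_const, card_range, nsmul_eq_mul]

lemma mul_sq_norm_sum_le (hab : a ≤ b) (hf : ∀ n, ‖f n‖ ≤ 1) (hf0 : ∀ n ∉ Icc a b, f n = 0)
    (m R : ℕ) :
    R * ‖∑ n ∈ Icc a b, f n‖ ^ 2
      ≤ (#(Icc a b) + R * m) * (#(Icc a b) + 2 * ∑ d ∈ Icc 1 (R - 1),
        ‖∑ n ∈ Icc a b, conj (f (n + ↑(d * m))) * f n‖) := by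
  obtain rfl | hR := R.eq_zero_or_pos
  · simp only [CharP.cast_eq_zero, zero_mul]
    positivity
  have cauchySchwarz := (pow_le_pow_left₀ (norm_nonneg _)
    (norm_sum_le (Icc (a - ↑(R * m)) b) fun n ↦ ∑ r ∈ range R, f (n + ↑(r * m))) 2).trans
    sq_sum_le_card_mul_sum_sq
  rw [sum_sum_range_shift hf0, norm_mul, Complex.norm_natCast, card_Icc_sub_natCast hab]
    at cauchySchwarz
  have hsq := sum_norm_sq_sum_range_shift_le hf hf0 m R
  refine le_of_mul_le_mul_left ?_ (Nat.cast_pos.2 hR : (0 : ℝ) < R)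
  push_cast at cauchySchwarz
  calc (R : ℝ) * (R * ‖∑ n ∈ Icc a b, f n‖ ^ 2) = (R * ‖∑ n ∈ Icc a b, f n‖) ^ 2 := by ring
    _ ≤ _ := cauchySchwarz
    _ ≤ _ := mul_le_mul_of_nonneg_left hsq (by positivity)
    _ = _ := by ring

-- van der Corput's inequality, with shifts restricted to multiples of `m`.
theorem norm_expect_sq_le (hab : a ≤ b) (hf : ∀ n, ‖f n‖ ≤ 1) (hf0 : ∀ n ∉ Icc a b, f n = 0)
    (m : ℕ) {R : ℕ} (hR : 1 ≤ R) :
    ‖𝔼 n ∈ Icc a b, f n‖ ^ 2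
      ≤ 2 * ((R : ℝ)⁻¹ * ∑ s ∈ Icc 1 (R - 1), ‖𝔼 n ∈ Icc a b, conj (f (n + ↑(s * m))) * f n‖
        + m * R / #(Icc a b) + (R : ℝ)⁻¹) := by
  have hN : (1 : ℝ) ≤ #(Icc a b) := by
    simp only [Int.card_Icc]
    exact_mod_cast (by omega : 1 ≤ (b + 1 - a).toNat)
  have hcorr_le : ∑ d ∈ Icc 1 (R - 1), ‖∑ n ∈ Icc a b, conj (f (n + ↑(d * m))) * f n‖
      ≤ (R - 1) * #(Icc a b) := by
    refine (sum_le_card_nsmul _ _ _ fun d _ ↦ norm_sum_conj_shift_mul_le hf _).trans_eq ?_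
    rw [nsmul_eq_mul, Nat.card_Icc, Nat.add_sub_cancel, Nat.cast_sub hR, Nat.cast_one]
  have key := mul_sq_norm_sum_le hab hf hf0 m R
  simp only [expect_eq_sum_div_card, norm_div, Complex.norm_natCast, ← sum_div] at key ⊢
  generalize ‖∑ n ∈ Icc a b, f n‖ = P at key ⊢
  generalize ∑ d ∈ Icc 1 (R - 1), ‖∑ n ∈ Icc a b, conj (f (n + ↑(d * m))) * f n‖ = S
    at key hcorr_le ⊢
  generalize (#(Icc a b) : ℝ) = N at key hcorr_le hN ⊢
  have hRm : (0 : ℝ) ≤ R * m := by positivity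
  calc (P / N) ^ 2 = R * P ^ 2 / (R * N ^ 2) := by field_simp
    _ ≤ 2 * (S * N + m * R ^ 2 * N + N ^ 2) / (R * N ^ 2) := by
        refine div_le_div_of_nonneg_right ?_ (by positivity)
        nlinarith [mul_le_mul_of_nonneg_left hcorr_le hRm, mul_nonneg hRm (by positivity : 0 ≤ N)]
    _ = _ := by field_simp

end VanDerCorput

noncomputable def cubeProduct (Q : ℕ) (f : ℤ → ℂ) (t : Fin Q → ℤ) (n : ℤ) : ℂ :=
  ∏ ε : Fin Q → Bool,
    if Even #{ℓ | ε ℓ = true} then f (n + ∑ ℓ, if ε ℓ then t ℓ else 0)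
    else conj (f (n + ∑ ℓ, if ε ℓ then t ℓ else 0))

section cubeProduct

variable {Q : ℕ} {f : ℤ → ℂ}

@[simp]
lemma cubeProduct_zero (t : Fin 0 → ℤ) : cubeProduct 0 f t = f := by
  ext n
  simp [cubeProduct]

lemma cubeProduct_succ (s : ℤ) (t : Fin Q → ℤ) (n : ℤ) :
    cubeProduct (Q + 1) f (Fin.cons s t) n
      = conj (cubeProduct Q f t (n + s)) * cubeProduct Q f t n := by
  have hcard (b : Bool) (ε : Fin Q → Bool) :
      #{ℓ | (Fin.cons b ε : Fin (Q + 1) → Bool) ℓ = true}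
        = #{ℓ | ε ℓ = true} + if b then 1 else 0 := by
    rw [card_filter, card_filter, Fin.sum_univ_succ]
    simp [add_comm]
  have hsum (b : Bool) (ε : Fin Q → Bool) :
      (∑ ℓ, if (Fin.cons b ε : Fin (Q + 1) → Bool) ℓ then (Fin.cons s t : Fin (Q + 1) → ℤ) ℓ else 0)
        = (if b then s else 0) + ∑ ℓ, if ε ℓ then t ℓ else 0 := by
    simp [Fin.sum_univ_succ]
  rw [cubeProduct, ← (Fin.consEquiv fun _ ↦ Bool).prod_comp, Fintype.prod_prod_type,
    Fintype.prod_bool, cubeProduct, cubeProduct, map_prod, ← prod_mul_distrib, ← prod_mul_distrib]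
  refine prod_congr rfl fun ε _ ↦ ?_
  simp only [Fin.consEquiv_apply, hcard, hsum, if_true, Nat.even_add_one, ← add_assoc]
  by_cases h : Even #{ℓ | ε ℓ = true} <;> simp [h]

lemma norm_cubeProduct_le (hf : ∀ n, ‖f n‖ ≤ 1) (t : Fin Q → ℤ) (n : ℤ) :
    ‖cubeProduct Q f t n‖ ≤ 1 := by
  rw [cubeProduct, norm_prod]
  exact prod_le_one (fun _ _ ↦ norm_nonneg _) fun ε _ ↦ by split_ifs <;> simp [hf]

lemma cubeProduct_eq_zero {n : ℤ} (hn : f n = 0) (t : Fin Q → ℤ) : cubeProduct Q f t n = 0 :=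
  prod_eq_zero (mem_univ fun _ ↦ false) (by simp [hn])

lemma cubeProduct_cons_mul (m : Fin (Q + 1) → ℕ) (s : ℕ) (r : Fin Q → ℕ) (n : ℤ) :
    cubeProduct (Q + 1) f (fun ℓ ↦ ↑((Fin.cons s r : Fin (Q + 1) → ℕ) ℓ * m ℓ)) n
      = conj (cubeProduct Q f (fun ℓ ↦ ↑(r ℓ * Fin.tail m ℓ)) (n + ↑(s * m 0)))
        * cubeProduct Q f (fun ℓ ↦ ↑(r ℓ * Fin.tail m ℓ)) n := by
  rw [← cubeProduct_succ]
  congr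
  ext ℓ
  cases ℓ using Fin.cases <;> simp [Fin.tail]

end cubeProduct

noncomputable def meanCubeCorrelation (Q : ℕ) (a b : ℤ) (f : ℤ → ℂ) (m : Fin Q → ℕ) (R : ℕ) : ℝ :=
  ((R : ℝ) ^ Q)⁻¹ * ∑ r ∈ Fintype.piFinset (fun _ : Fin Q ↦ Icc 1 (R - 1)),
    ‖𝔼 n ∈ Icc a b, cubeProduct Q f (fun ℓ ↦ ↑(r ℓ * m ℓ)) n‖

lemma six_pow_two_pow_succ_sub_one (Q : ℕ) :
    (6 : ℝ) ^ (2 ^ (Q + 1) - 1) = 6 * (6 ^ (2 ^ Q - 1)) ^ 2 := by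
  rw [← pow_mul, ← pow_succ']
  congr 1
  have := Nat.one_le_two_pow (n := Q)
  rw [pow_succ]
  omega

section Induction

variable {Q : ℕ} {a b : ℤ} {f : ℤ → ℂ}

lemma meanCubeCorrelation_nonneg (m : Fin Q → ℕ) (R : ℕ) :
    0 ≤ meanCubeCorrelation Q a b f m R := by
  unfold meanCubeCorrelation
  positivity

lemma sq_meanCubeCorrelation_le (hab : a ≤ b) (hf : ∀ n, ‖f n‖ ≤ 1)
    (hf0 : ∀ n ∉ Icc a b, f n = 0) (m : Fin (Q + 1) → ℕ) {R : ℕ} (hR : 1 ≤ R) :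
    meanCubeCorrelation Q a b f (Fin.tail m) R ^ 2
      ≤ 2 * (meanCubeCorrelation (Q + 1) a b f m R + m 0 * R / #(Icc a b) + (R : ℝ)⁻¹) := by
  rw [add_assoc]
  set c : ℝ := m 0 * R / #(Icc a b) + (R : ℝ)⁻¹
  set P := Fintype.piFinset fun _ : Fin Q ↦ Icc 1 (R - 1)
  set x' : (Fin (Q + 1) → ℕ) → ℝ := fun r ↦
    ‖𝔼 n ∈ Icc a b, cubeProduct (Q + 1) f (fun ℓ ↦ ↑(r ℓ * m ℓ)) n‖
  have hvdc (r : Fin Q → ℕ) :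
      ‖𝔼 n ∈ Icc a b, cubeProduct Q f (fun ℓ ↦ ↑(r ℓ * Fin.tail m ℓ)) n‖ ^ 2
        ≤ 2 * ((R : ℝ)⁻¹ * ∑ s ∈ Icc 1 (R - 1), x' (Fin.cons s r) + c) := by
    simp only [x', cubeProduct_cons_mul, c, ← add_assoc]
    exact norm_expect_sq_le hab (norm_cubeProduct_le hf _)
      (fun n hn ↦ cubeProduct_eq_zero (hf0 n hn) _) (m 0) hR
  have hR0 : (0 : ℝ) < R ^ Q := by positivity
  have hcard : (#P : ℝ) ≤ R ^ Q := by
    rw [Fintype.card_piFinset_const, Nat.card_Icc]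
    push_cast
    gcongr
    omega
  have hc : 0 ≤ c := by positivity
  have hcard_mul : ((R : ℝ) ^ Q)⁻¹ * #P * c ≤ c :=
    mul_le_of_le_one_left hc (inv_mul_le_one_of_le₀ hcard hR0.le)
  calc meanCubeCorrelation Q a b f (Fin.tail m) R ^ 2
      ≤ ((R : ℝ) ^ Q)⁻¹ * ∑ r ∈ P,
          ‖𝔼 n ∈ Icc a b, cubeProduct Q f (fun ℓ ↦ ↑(r ℓ * Fin.tail m ℓ)) n‖ ^ 2 :=
        sq_inv_mul_sum_le hR0 hcard _
    _ ≤ ((R : ℝ) ^ Q)⁻¹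
          * ∑ r ∈ P, 2 * ((R : ℝ)⁻¹ * ∑ s ∈ Icc 1 (R - 1), x' (Fin.cons s r) + c) := by
        gcongr with r
        exact hvdc r
    _ = 2 * (((R : ℝ) ^ (Q + 1))⁻¹ * ∑ s ∈ Icc 1 (R - 1), ∑ r ∈ P, x' (Fin.cons s r)
          + ((R : ℝ) ^ Q)⁻¹ * #P * c) := by
        simp only [← mul_sum, sum_add_distrib, sum_const, nsmul_eq_mul, pow_succ, mul_inv]
        rw [sum_comm]
        ring
    _ ≤ 2 * (meanCubeCorrelation (Q + 1) a b f m R + c) := by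
        rw [meanCubeCorrelation, sum_piFinset_fin_succ]
        gcongr

theorem norm_expect_pow_le (hab : a ≤ b) (hf : ∀ n, ‖f n‖ ≤ 1)
    (hf0 : ∀ n ∉ Icc a b, f n = 0) (m : Fin Q → ℕ) {R : ℕ} (hR : 1 ≤ R) :
    ‖𝔼 n ∈ Icc a b, f n‖ ^ 2 ^ Q ≤ 6 ^ (2 ^ Q - 1) *
      (meanCubeCorrelation Q a b f m R + (∑ ℓ, (m ℓ : ℝ)) * R / #(Icc a b) + (R : ℝ)⁻¹) := by
  induction Q with
  | zero =>
    simp [meanCubeCorrelation]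
  | succ Q ih =>
    set X' := meanCubeCorrelation (Q + 1) a b f m R
    set X := meanCubeCorrelation Q a b f (Fin.tail m) R
    set E' : ℝ := (∑ ℓ, (m ℓ : ℝ)) * R / #(Icc a b) + (R : ℝ)⁻¹
    set E : ℝ := (∑ ℓ, (Fin.tail m ℓ : ℝ)) * R / #(Icc a b) + (R : ℝ)⁻¹
    have hsplit : ∑ ℓ, (m ℓ : ℝ) = m 0 + ∑ ℓ, (Fin.tail m ℓ : ℝ) := Fin.sum_univ_succ _
    have hE : 0 ≤ E := by positivity
    have hEE' : E ≤ E' := by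
      simp only [E, E', hsplit]
      gcongr
      exact le_add_of_nonneg_left (Nat.cast_nonneg _)
    have hcE' : (m 0 : ℝ) * R / #(Icc a b) + (R : ℝ)⁻¹ ≤ E' := by
      simp only [E', hsplit]
      gcongr
      exact le_add_of_nonneg_right (by positivity)
    have hX' : 0 ≤ X' := meanCubeCorrelation_nonneg m R
    rw [add_assoc, six_pow_two_pow_succ_sub_one]
    -- `E ^ 2` can only be absorbed into `E'` when `E' < 1`; otherwise the bound is trivial.
    obtain hE'_ge | hE'_lt := le_or_gt 1 E'
    · calc ‖𝔼 n ∈ Icc a b, f n‖ ^ 2 ^ (Q + 1) ≤ 1 :=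
            pow_le_one₀ (norm_nonneg _) (norm_expect_le_one fun n _ ↦ hf n)
        _ ≤ 6 * (6 ^ (2 ^ Q - 1)) ^ 2 * (X' + E') := by
            refine one_le_mul_of_one_le_of_one_le ?_ (by linarith)
            exact one_le_mul_of_one_le_of_one_le (by norm_num)
              (one_le_pow₀ (one_le_pow₀ (by norm_num)))
    · have hE2 : E ^ 2 ≤ E' := by nlinarith
      calc ‖𝔼 n ∈ Icc a b, f n‖ ^ 2 ^ (Q + 1) = (‖𝔼 n ∈ Icc a b, f n‖ ^ 2 ^ Q) ^ 2 := by
            rw [pow_succ, pow_mul]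
        _ ≤ (6 ^ (2 ^ Q - 1) * (X + E)) ^ 2 := by
            gcongr
            simpa only [add_assoc] using ih (Fin.tail m)
        _ ≤ (6 ^ (2 ^ Q - 1)) ^ 2 * (2 * (X ^ 2 + E ^ 2)) := by
            rw [mul_pow]
            gcongr
            nlinarith [sq_nonneg (X - E)]
        _ ≤ (6 ^ (2 ^ Q - 1)) ^ 2 * (2 * (2 * (X' + (m 0 * R / #(Icc a b) + (R : ℝ)⁻¹)) + E')) := by
            gcongr
            simpa only [add_assoc] using sq_meanCubeCorrelation_le hab hf hf0 m hR
        _ ≤ 6 * (6 ^ (2 ^ Q - 1)) ^ 2 * (X' + E') := by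
            rw [mul_comm 6, mul_assoc]
            exact mul_le_mul_of_nonneg_left (by linarith) (by positivity)

end Induction

theorem stmt12_general (Q : ℕ) :
    ∃ C > (0:ℝ), ∀ a b : ℤ, a ≤ b → ∀ g : ℤ → ℂ,
      (∀ n ∈ Finset.Icc a b, ‖g n‖ = 1) →
      (∀ n ∉ Finset.Icc a b, g n = 0) →
      ∀ m : Fin Q → ℕ, (∀ ℓ, 1 ≤ m ℓ) → ∀ R : ℕ, 1 ≤ R →
      ‖((Finset.Icc a b).card : ℂ)⁻¹ * ∑ n ∈ Finset.Icc a b, g n‖ ^ (2 ^ Q)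
        ≤ C * (((R : ℝ) ^ Q)⁻¹ *
              (∑ r ∈ Fintype.piFinset (fun _ : Fin Q => Finset.Icc 1 (R - 1)),
                ‖((Finset.Icc a b).card : ℂ)⁻¹ *
                  ∑ n ∈ Finset.Icc a b,
                    ∏ ε : Fin Q → Bool,
                      (if Even (Finset.univ.filter (fun ℓ => ε ℓ = true)).card then
                        g (n + ∑ ℓ, (if ε ℓ then ((r ℓ * m ℓ : ℕ) : ℤ) else 0))
                      else
                        (starRingEnd ℂ)
                          (g (n + ∑ ℓ, (if ε ℓ then ((r ℓ * m ℓ : ℕ) : ℤ) else 0))))‖)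
            + (∑ ℓ, (m ℓ : ℝ)) * R / (Finset.Icc a b).card
            + (R : ℝ)⁻¹) := by
  refine ⟨6 ^ (2 ^ Q - 1), by positivity, fun a b hab g hg1 hg0 m _ R hR ↦ ?_⟩
  have hg (n : ℤ) : ‖g n‖ ≤ 1 := by
    by_cases hn : n ∈ Icc a b
    · exact (hg1 n hn).le
    · simp [hg0 n hn]
  simpa only [meanCubeCorrelation, cubeProduct, expect_eq_sum_div_card, inv_mul_eq_div]
    using norm_expect_pow_le hab hg hg0 m hR

theorem stmt12 (Q : ℕ) (hQ : 1 ≤ Q) :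
    ∃ C > (0:ℝ), ∀ a b : ℤ, a ≤ b → ∀ g : ℤ → ℂ,
      (∀ n ∈ Finset.Icc a b, ‖g n‖ = 1) →
      (∀ n ∉ Finset.Icc a b, g n = 0) →
      ∀ m : Fin Q → ℕ, (∀ ℓ, 1 ≤ m ℓ) → ∀ R : ℕ, 1 ≤ R →
      ‖((Finset.Icc a b).card : ℂ)⁻¹ * ∑ n ∈ Finset.Icc a b, g n‖ ^ (2 ^ Q)
        ≤ C * (((R : ℝ) ^ Q)⁻¹ *
              (∑ r ∈ Fintype.piFinset (fun _ : Fin Q => Finset.Icc 1 (R - 1)),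
                ‖((Finset.Icc a b).card : ℂ)⁻¹ *
                  ∑ n ∈ Finset.Icc a b,
                    ∏ ε : Fin Q → Bool,
                      (if Even (Finset.univ.filter (fun ℓ => ε ℓ = true)).card then
                        g (n + ∑ ℓ, (if ε ℓ then ((r ℓ * m ℓ : ℕ) : ℤ) else 0))
                      else
                        (starRingEnd ℂ)
                          (g (n + ∑ ℓ, (if ε ℓ then ((r ℓ * m ℓ : ℕ) : ℤ) else 0))))‖)
            + (∑ ℓ, (m ℓ : ℝ)) * R / (Finset.Icc a b).card
            + (R : ℝ)⁻¹) :=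
  stmt12_general Q
end
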